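/- There exist constants c, C > 0 such that for every integer n ≥ 1 and every integer z, the simple random walk point probability satisfies the Gaussian bound √n · T(n,z) ≤ C · exp(−c·z²/n). -/

import Mathlib

open Real

/-- `T(n,z) = 2^{-n} binom(n, (n+z)/2)` when `|z| ≤ n` and `z ≡ n (mod 2)`, else `0`. -/
noncomputable def Tprob (n : ℕ) (z : ℤ) : ℝ :=
  if |z| ≤ (n : ℤ) ∧ ((n : ℤ) + z) % 2 = 0 then
    (2 : ℝ)⁻¹ ^ n * (n.choose (((n : ℤ) + z).toNat / 2) : ℝ)
  else 0

/-! Past the middle, the ratio `C(n,k+1) / C(n,k) = (n-k)/(k+1)` is at most `exp (-(2k+1-n)/n)`,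
so `C(n, n/2 + t) ≤ C(n, n/2) exp (-t(t-1)/n)`, and by symmetry `C(n,k)` decays like
`exp (-(2k-n)²/(8n))` away from the middle. The middle coefficient is controlled by
`√n C(n, n/2) ≤ 2ⁿ`, which comes from `C(2m,m)² (2m+1) ≤ 16ᵐ` by induction on `m`. -/

theorem Nat.centralBinom_sq_mul_le (m : ℕ) : m.centralBinom ^ 2 * (2 * m + 1) ≤ 16 ^ m := by
  induction m with
  | zero => simp
  | succ m ih =>
    have hrec := Nat.succ_mul_centralBinom_succ m
    have hsq : (m + 1) ^ 2 * (m + 1).centralBinom ^ 2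
        = 4 * (2 * m + 1) ^ 2 * m.centralBinom ^ 2 := by
      rw [← mul_pow, hrec]; ring
    have key : (m + 1) ^ 2 * ((m + 1).centralBinom ^ 2 * (2 * (m + 1) + 1))
        ≤ (m + 1) ^ 2 * 16 ^ (m + 1) := by
      calc (m + 1) ^ 2 * ((m + 1).centralBinom ^ 2 * (2 * (m + 1) + 1))
          = 4 * ((2 * m + 1) * (2 * m + 3)) * (m.centralBinom ^ 2 * (2 * m + 1)) := by
            rw [← mul_assoc, hsq]; ring
        _ ≤ 4 * (4 * (m + 1) ^ 2) * 16 ^ m :=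
            Nat.mul_le_mul (Nat.mul_le_mul_left 4 (by nlinarith)) ih
        _ = (m + 1) ^ 2 * 16 ^ (m + 1) := by ring
    exact Nat.le_of_mul_le_mul_left key (by positivity)

theorem Nat.choose_half_sq_mul_le (n : ℕ) : n.choose (n / 2) ^ 2 * n ≤ 4 ^ n := by
  obtain ⟨m, rfl | rfl⟩ := Nat.even_or_odd' n
  · rw [Nat.mul_div_cancel_left m two_pos, ← Nat.centralBinom_eq_two_mul_choose]
    calc m.centralBinom ^ 2 * (2 * m) ≤ m.centralBinom ^ 2 * (2 * m + 1) := by gcongr; omega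
      _ ≤ 16 ^ m := m.centralBinom_sq_mul_le
      _ = 4 ^ (2 * m) := by rw [pow_mul]; norm_num
  · have hhalf : (2 * m + 1) / 2 = m := by omega
    have hdouble : 2 * (2 * m + 1).choose m = (m + 1).centralBinom := by
      rw [Nat.centralBinom_eq_two_mul_choose, show 2 * (m + 1) = 2 * m + 1 + 1 by ring,
        Nat.choose_succ_succ, Nat.choose_symm_half]; ring
    rw [hhalf]
    refine Nat.le_of_mul_le_mul_left ?_ (show 0 < 4 by norm_num)
    calc 4 * ((2 * m + 1).choose m ^ 2 * (2 * m + 1))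
        = (m + 1).centralBinom ^ 2 * (2 * m + 1) := by rw [← hdouble]; ring
      _ ≤ (m + 1).centralBinom ^ 2 * (2 * (m + 1) + 1) := by gcongr; omega
      _ ≤ 16 ^ (m + 1) := (m + 1).centralBinom_sq_mul_le
      _ = 4 * 4 ^ (2 * m + 1) := by rw [pow_succ, pow_succ, pow_mul]; norm_num; ring

theorem sqrt_mul_choose_half_le (n : ℕ) : √n * n.choose (n / 2) ≤ (2 : ℝ) ^ n := by
  refine (pow_le_pow_iff_left₀ (by positivity) (by positivity) two_ne_zero).mp ?_
  rw [mul_pow, sq_sqrt n.cast_nonneg, ← pow_mul, mul_comm n 2, pow_mul]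
  exact_mod_cast (mul_comm _ _).trans_le n.choose_half_sq_mul_le |>.trans_eq (by norm_num)

theorem choose_succ_le_mul_exp {n k : ℕ} (h : n ≤ 2 * k + 1) :
    (n.choose (k + 1) : ℝ) ≤ n.choose k * exp (-(2 * k + 1 - n) / n) := by
  rcases lt_or_ge k n with hk | hk
  swap
  · rw [Nat.choose_eq_zero_of_lt (by omega), Nat.cast_zero]; positivity
  have hn : (0 : ℝ) < n := by exact_mod_cast (k.zero_le.trans_lt hk)
  have hrec : (n.choose (k + 1) : ℝ) * (k + 1) = n.choose k * (n - k) := by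
    rw [← Nat.cast_sub hk.le]; exact_mod_cast n.choose_succ_right_eq k
  have hfactor : (n : ℝ) - k ≤ (k + 1) * exp (-(2 * k + 1 - n) / n) :=
    calc (n : ℝ) - k ≤ (k + 1) * (-(2 * k + 1 - n) / n + 1) := by
          have h' : (n : ℝ) ≤ 2 * k + 1 := by exact_mod_cast h
          have hk' : (k : ℝ) + 1 ≤ n := by exact_mod_cast hk
          rw [div_add_one hn.ne', mul_div_assoc', le_div_iff₀ hn]
          nlinarith [mul_nonneg (sub_nonneg.mpr hk') (sub_nonneg.mpr h')]
      _ ≤ (k + 1) * exp (-(2 * k + 1 - n) / n) := by gcongr; exact add_one_le_exp _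
  refine le_of_mul_le_mul_right ?_ (show (0 : ℝ) < k + 1 by positivity)
  rw [hrec, mul_assoc, mul_comm (exp _)]
  exact mul_le_mul_of_nonneg_left hfactor (by positivity)

theorem choose_half_add_le (n t : ℕ) :
    (n.choose (n / 2 + t) : ℝ) ≤ n.choose (n / 2) * exp (-(t * (t - 1)) / n) := by
  induction t with
  | zero => simp
  | succ t ih =>
    have hexp : -(2 * ((n / 2 + t : ℕ) : ℝ) + 1 - n) / n ≤ -(2 * t) / n := by
      have : (n : ℝ) ≤ 2 * (n / 2 : ℕ) + 1 := by
        exact_mod_cast (by omega : n ≤ 2 * (n / 2) + 1)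
      gcongr; push_cast; linarith
    calc (n.choose (n / 2 + t + 1) : ℝ)
        ≤ n.choose (n / 2 + t) * exp (-(2 * ((n / 2 + t : ℕ) : ℝ) + 1 - n) / n) :=
          choose_succ_le_mul_exp (by omega)
      _ ≤ n.choose (n / 2) * exp (-(t * (t - 1)) / n) * exp (-(2 * t) / n) := by gcongr
      _ = n.choose (n / 2) * exp (-((t + 1 : ℕ) * ((t + 1 : ℕ) - 1)) / n) := by
          rw [mul_assoc, ← exp_add]; push_cast; ring_nf

theorem choose_le_choose_half_mul_exp {n : ℕ} (hn : 0 < n) (k : ℕ) :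
    (n.choose k : ℝ) ≤ n.choose (n / 2) * exp (1 / 2 - (2 * k - n) ^ 2 / (8 * n)) := by
  have hn' : (1 : ℝ) ≤ n := by exact_mod_cast hn
  have upper : ∀ k, n / 2 ≤ k →
      (n.choose k : ℝ) ≤ n.choose (n / 2) * exp (1 / 2 - (2 * k - n) ^ 2 / (8 * n)) := by
    intro k hk
    obtain ⟨t, rfl⟩ := Nat.exists_eq_add_of_le hk
    refine (choose_half_add_le n t).trans ?_
    gcongr
    field_simp
    obtain ⟨m, rfl | rfl⟩ := n.even_or_odd'
    · rw [Nat.mul_div_cancel_left m two_pos]; push_cast at hn' ⊢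
      nlinarith [sq_nonneg ((t : ℝ) - 1)]
    · rw [show (2 * m + 1) / 2 = m by omega]; push_cast at hn' ⊢
      nlinarith [sq_nonneg (2 * (t : ℝ) - 1)]
  rcases le_or_gt (n / 2) k with hk | hk
  · exact upper k hk
  · rw [← Nat.choose_symm (by omega : k ≤ n)]
    convert upper (n - k) (by omega) using 4
    rw [Nat.cast_sub (by omega : k ≤ n)]; ring

/-- Gaussian upper bound for the simple random walk point probabilities: there are
`c, C > 0` with `√n T(n,z) ≤ C exp(-c z²/n)` for all `n ≥ 1` and all `z ∈ ℤ`. -/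
theorem Tprob_gaussian_bound :
    ∃ c C : ℝ, 0 < c ∧ 0 < C ∧ ∀ n : ℕ, 1 ≤ n → ∀ z : ℤ,
      Real.sqrt n * Tprob n z ≤ C * Real.exp (-c * (z : ℝ) ^ 2 / n) := by
  refine ⟨1 / 8, exp (1 / 2), by norm_num, exp_pos _, fun n hn z => ?_⟩
  unfold Tprob
  split_ifs with h
  · set k := ((n : ℤ) + z).toNat / 2
    have hk : (2 * k : ℝ) - n = z := by
      have : (2 * k : ℤ) = n + z := by have := abs_le.mp h.1; omega
      rw [sub_eq_iff_eq_add']; exact_mod_cast this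
    have hchoose := choose_le_choose_half_mul_exp hn k
    rw [hk] at hchoose
    calc √n * ((2 : ℝ)⁻¹ ^ n * n.choose k)
        ≤ √n * ((2 : ℝ)⁻¹ ^ n * (n.choose (n / 2) * exp (1 / 2 - z ^ 2 / (8 * n)))) := by
          gcongr
      _ = (2 : ℝ)⁻¹ ^ n * (√n * n.choose (n / 2)) * exp (1 / 2 - z ^ 2 / (8 * n)) := by ring
      _ ≤ (2 : ℝ)⁻¹ ^ n * 2 ^ n * exp (1 / 2 - z ^ 2 / (8 * n)) := by
          gcongr; exact sqrt_mul_choose_half_le n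
      _ = exp (1 / 2) * exp (-(1 / 8) * z ^ 2 / n) := by
          rw [← mul_pow, ← exp_add]; norm_num; ring_nf
  · rw [mul_zero]; positivity
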